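/- The number of labeled rooted forests on n vertices with exactly k roots (trees) equals binomial(n-1, k-1) * n^(n-k). -/

import Mathlib

/-- `iterParent f m v` follows the parent map `f` for `m` steps starting at `v`
(`none` means undefined / no parent). -/
def iterParent {n : ℕ} (f : Fin n → Option (Fin n)) : ℕ → Fin n → Option (Fin n)
  | 0, v => some v
  | m + 1, v => (iterParent f m v).bind f

/-- A parent function `f : Fin n → Option (Fin n)` encodes a labeled rooted forest
iff following parents from any vertex eventually (within `n` steps) terminates. -/
def IsRootedForest {n : ℕ} (f : Fin n → Option (Fin n)) : Prop :=
  ∀ v, iterParent f n v = none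

/-- The number of roots (vertices with no parent) of a labeled rooted forest. -/
def numRoots {n : ℕ} (f : Fin n → Option (Fin n)) : ℕ :=
  (Finset.univ.filter fun v => f v = none).card

instance {n : ℕ} : DecidablePred (@IsRootedForest n) := fun f =>
  inferInstanceAs (Decidable (∀ v, iterParent f n v = none))

/-!
Double counting. A list of `m` edges `(c, p)` with distinct children `c` whose parent map is a
forest is a way of building that forest from the empty one (reading the list from the end): each
step makes a current root `c` a child of a vertex `p` outside its tree. With `i` edges placed there
are `n - i` roots, and each of the `n` vertices can receive any of the `n - i - 1` roots of the
other trees, so there are `∏_{i<m} n (n - 1 - i) = n ^ m (n - 1)! / (n - 1 - m)!` such lists. Each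
forest with `m` edges arises from exactly `m!` of them, one per ordering of its edges, so there are
`C(n - 1, m) n ^ m` forests with `n - m` roots.
-/

open Finset Function

section IterParent

variable {n : ℕ} {f : Fin n → Option (Fin n)}

lemma iterParent_add (f : Fin n → Option (Fin n)) (a b : ℕ) (v : Fin n) :
    iterParent f (a + b) v = (iterParent f a v).bind (iterParent f b) := by
  induction b with
  | zero => simp [iterParent]
  | succ b ih => rw [← Nat.add_assoc, iterParent, ih, Option.bind_assoc]; rfl

lemma iterParent_succ' (f : Fin n → Option (Fin n)) (m : ℕ) (v : Fin n) :
    iterParent f (m + 1) v = (f v).bind (iterParent f m) := by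
  rw [Nat.add_comm, iterParent_add]; rfl

lemma iterParent_eq_none_of_le {a b : ℕ} {v : Fin n} (hab : a ≤ b)
    (ha : iterParent f a v = none) : iterParent f b v = none := by
  obtain ⟨c, rfl⟩ := Nat.exists_eq_add_of_le hab
  rw [iterParent_add, ha, Option.bind_none]

lemma iterParent_eq_self_of_iterParent_eq {m j : ℕ} {w u : Fin n}
    (hw : iterParent f m w = some w) (hu : iterParent f j w = some u) :
    iterParent f m u = some u := by
  have h := iterParent_add f j m w
  rw [Nat.add_comm, iterParent_add, hw, hu, Option.bind_some, Option.bind_some] at h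
  exact h ▸ hu

lemma IsRootedForest.iterParent_succ_ne_self (hf : IsRootedForest f) (v : Fin n) (m : ℕ) :
    iterParent f (m + 1) v ≠ some v := by
  intro hcyc
  have hiter : ∀ t, iterParent f (t * (m + 1)) v = some v := by
    intro t
    induction t with
    | zero => rw [Nat.zero_mul]; rfl
    | succ t ih => rw [Nat.succ_mul, iterParent_add, ih, Option.bind_some, hcyc]
  have hnone := iterParent_eq_none_of_le (Nat.le_mul_of_pos_right n m.succ_pos) (hf v)
  simp [hiter] at hnone

lemma isRootedForest_of_iterParent_succ_ne_self
    (hacyc : ∀ (v : Fin n) (m : ℕ), iterParent f (m + 1) v ≠ some v) : IsRootedForest f := by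
  intro v
  by_contra hv
  have hdef : ∀ i ≤ n, iterParent f i v = some ((iterParent f i v).getD v) := fun i hi =>
    (Option.getD_of_ne_none (fun h => hv (iterParent_eq_none_of_le hi h)) v).symm
  obtain ⟨a, b, hne, hab⟩ := Fintype.exists_ne_map_eq_of_card_lt
    (fun i : Fin (n + 1) => (iterParent f i v).getD v) (by simp)
  wlog hlt : a < b generalizing a b
  · exact this b a hne.symm hab.symm (lt_of_le_of_ne (not_lt.1 hlt) hne.symm)
  obtain ⟨d, hd⟩ := Nat.exists_eq_add_of_lt hlt
  have hstep := iterParent_add f a (d + 1) v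
  rw [← Nat.add_assoc, ← hd, hdef a (by omega), hdef b (by omega), Option.bind_some] at hstep
  exact hacyc _ d (hab ▸ hstep.symm)

end IterParent

section Reaches

variable {n : ℕ} {f : Fin n → Option (Fin n)}

def Reaches (f : Fin n → Option (Fin n)) (v w : Fin n) : Prop :=
  ∃ m, iterParent f m v = some w

lemma iterParent_update_of_forall_ne {c : Fin n} (x : Option (Fin n)) {m : ℕ} {v : Fin n}
    (h : ∀ j < m, iterParent f j v ≠ some c) :
    iterParent (update f c x) m v = iterParent f m v := by
  induction m with
  | zero => rfl
  | succ m ih =>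
    rw [iterParent, iterParent, ih fun j hj => h j (Nat.lt_succ_of_lt hj)]
    cases hm : iterParent f m v with
    | none => rfl
    | some u =>
      simp only [Option.bind_some]
      exact update_of_ne (fun huc : u = c => h m m.lt_succ_self (by rw [hm, huc])) x f

lemma Reaches.update {c v : Fin n} (h : Reaches f v c) (x : Option (Fin n)) :
    Reaches (update f c x) v c := by
  classical
  exact ⟨Nat.find h, (iterParent_update_of_forall_ne x fun j hj => Nat.find_min h hj).trans
    (Nat.find_spec h)⟩

lemma reaches_update_iff {c v : Fin n} {x : Option (Fin n)} :
    Reaches (update f c x) v c ↔ Reaches f v c :=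
  ⟨fun h => by simpa using h.update (f c), fun h => h.update x⟩

lemma IsRootedForest.exists_reaches_root (hf : IsRootedForest f) (v : Fin n) :
    ∃ r, f r = none ∧ Reaches f v r := by
  classical
  have hex : ∃ m, iterParent f (m + 1) v = none :=
    ⟨n - 1, by rw [Nat.sub_add_cancel v.pos]; exact hf v⟩
  obtain ⟨r, hr⟩ : ∃ r, iterParent f (Nat.find hex) v = some r := by
    rw [← Option.ne_none_iff_exists']
    rcases Nat.eq_zero_or_eq_succ_pred (Nat.find hex) with h0 | hsucc
    · rw [h0]; simp [iterParent]
    · exact hsucc ▸ Nat.find_min hex (by omega)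
  have hroot := Nat.find_spec hex
  rw [iterParent, hr, Option.bind_some] at hroot
  exact ⟨r, hroot, _, hr⟩

lemma eq_of_reaches_of_eq_none {v r r' : Fin n} (h : Reaches f v r) (hr : f r = none)
    (h' : Reaches f v r') (hr' : f r' = none) : r = r' := by
  obtain ⟨a, ha⟩ := h
  obtain ⟨b, hb⟩ := h'
  wlog hab : a ≤ b generalizing a b r r'
  · exact (this hr' hr b hb a ha (by omega)).symm
  obtain ⟨d, rfl⟩ := Nat.exists_eq_add_of_le hab
  rw [iterParent_add, ha, Option.bind_some] at hb
  cases d with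
  | zero => exact Option.some_injective _ hb
  | succ d => simp [iterParent_succ', hr] at hb

lemma IsRootedForest.iterParent_update_succ_self {c w : Fin n} {x : Option (Fin n)} {m : ℕ}
    (hf : IsRootedForest f) (hcyc : iterParent (update f c x) (m + 1) w = some w) :
    iterParent (update f c x) (m + 1) c = some c := by
  by_cases hc : ∃ j < m + 1, iterParent (update f c x) j w = some c
  · obtain ⟨j, -, hj⟩ := hc
    exact iterParent_eq_self_of_iterParent_eq hcyc hj
  · push Not at hc
    have := iterParent_update_of_forall_ne (f c) hc
    rw [update_idem, update_eq_self, hcyc] at this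
    exact absurd this (hf.iterParent_succ_ne_self w m)

lemma IsRootedForest.update_none (hf : IsRootedForest f) (c : Fin n) :
    IsRootedForest (update f c none) :=
  isRootedForest_of_iterParent_succ_ne_self fun w m hcyc => by
    simpa [iterParent_succ'] using hf.iterParent_update_succ_self hcyc

lemma isRootedForest_update_some_iff {c p : Fin n} (hc : f c = none) :
    IsRootedForest (update f c (some p)) ↔ IsRootedForest f ∧ ¬Reaches f p c := by
  have hcycle : ∀ m, iterParent (update f c (some p)) (m + 1) c = some c ↔
      iterParent (update f c (some p)) m p = some c := fun m => by
    rw [iterParent_succ', update_self, Option.bind_some]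
  constructor
  · intro hg
    refine ⟨by simpa [update_idem, ← hc] using hg.update_none c, fun hpc => ?_⟩
    obtain ⟨m, hm⟩ := hpc.update (some p)
    exact hg.iterParent_succ_ne_self c m ((hcycle m).2 hm)
  · rintro ⟨hf, hpc⟩
    refine isRootedForest_of_iterParent_succ_ne_self fun w m hcyc => hpc ?_
    exact reaches_update_iff.1 ⟨m, (hcycle m).1 (hf.iterParent_update_succ_self hcyc)⟩

end Reaches

section ParentMap

variable {n : ℕ}

def parentMap : List (Fin n × Fin n) → Fin n → Option (Fin n)
  | [] => fun _ => none
  | e :: l => update (parentMap l) e.1 (some e.2)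

lemma parentMap_eq_none_iff (l : List (Fin n × Fin n)) (v : Fin n) :
    parentMap l v = none ↔ v ∉ l.map Prod.fst := by
  induction l with
  | nil => simp [parentMap]
  | cons e l ih =>
    by_cases hv : v = e.1
    · simp [parentMap, hv]
    · simp [parentMap, ih, hv]

lemma mem_iff_parentMap_eq_some {l : List (Fin n × Fin n)} (hl : (l.map Prod.fst).Nodup)
    (v w : Fin n) : (v, w) ∈ l ↔ parentMap l v = some w := by
  induction l with
  | nil => simp [parentMap]
  | cons e l ih =>
    rw [List.map_cons, List.nodup_cons] at hl
    by_cases hv : v = e.1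
    · subst hv
      have hnot : (e.1, w) ∉ l := fun h => hl.1 (List.mem_map.2 ⟨_, h, rfl⟩)
      simp [parentMap, hnot, Prod.ext_iff, eq_comm]
    · simp [parentMap, ← ih hl.2, Prod.ext_iff, hv]

lemma numRoots_parentMap_add_length {l : List (Fin n × Fin n)} (hl : (l.map Prod.fst).Nodup) :
    numRoots (parentMap l) + l.length = n := by
  have hroots : ({v | parentMap l v = none} : Finset (Fin n)) = (l.map Prod.fst).toFinsetᶜ := by
    ext v
    simp [parentMap_eq_none_iff]
  rw [numRoots, hroots, ← List.length_map (f := Prod.fst), ← List.toFinset_card_of_nodup hl,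
    card_compl_add_card, Fintype.card_fin]

lemma numRoots_le (f : Fin n → Option (Fin n)) : numRoots f ≤ n :=
  (card_filter_le _ _).trans (card_fin n).le

def edges (F : Fin n → Option (Fin n)) : Finset (Fin n × Fin n) :=
  {e | F e.1 = some e.2}

lemma perm_edges_toList_iff {l : List (Fin n × Fin n)} {F : Fin n → Option (Fin n)} :
    l.Perm (edges F).toList ↔ (l.map Prod.fst).Nodup ∧ parentMap l = F := by
  have mem_edges : ∀ e, e ∈ (edges F).toList ↔ F e.1 = some e.2 := by simp [edges]
  constructor
  · intro hp
    have hmem : ∀ e ∈ l, F e.1 = some e.2 := fun e he => (mem_edges e).1 (hp.subset he)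
    have hfst : (l.map Prod.fst).Nodup := by
      refine (hp.nodup_iff.2 (nodup_toList _)).map_on fun x hx y hy hxy => Prod.ext hxy ?_
      exact Option.some_injective _ ((hmem x hx).symm.trans (hxy ▸ hmem y hy))
    refine ⟨hfst, funext fun v => Option.ext fun w => ?_⟩
    rw [← mem_iff_parentMap_eq_some hfst, hp.mem_iff, mem_edges]
  · rintro ⟨hfst, rfl⟩
    refine (List.perm_ext_iff_of_nodup hfst.of_map (nodup_toList _)).2 fun e => ?_
    rw [mem_edges, mem_iff_parentMap_eq_some hfst]

end ParentMap

section Counting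

variable {n : ℕ}

open Classical in
noncomputable def attachable (g : Fin n → Option (Fin n)) : Finset (Fin n × Fin n) :=
  {e | g e.1 = none ∧ ¬Reaches g e.2 e.1}

@[simp]
lemma mem_attachable {g : Fin n → Option (Fin n)} {e : Fin n × Fin n} :
    e ∈ attachable g ↔ g e.1 = none ∧ ¬Reaches g e.2 e.1 := by
  simp [attachable]

open Classical in
lemma IsRootedForest.card_attachable {g : Fin n → Option (Fin n)} (hg : IsRootedForest g) :
    #(attachable g) = n * (numRoots g - 1) := by
  have hfiber : ∀ p, #{c | g c = none ∧ ¬Reaches g p c} = numRoots g - 1 := by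
    intro p
    obtain ⟨r, hr, hpr⟩ := hg.exists_reaches_root p
    have hset : ({c | g c = none ∧ ¬Reaches g p c} : Finset (Fin n)) =
        ({v | g v = none} : Finset (Fin n)).erase r := by
      ext c
      simp only [mem_filter, mem_erase, mem_univ, true_and]
      exact ⟨fun ⟨hc, hpc⟩ => ⟨fun hcr => hpc (hcr ▸ hpr), hc⟩,
        fun ⟨hcr, hc⟩ => ⟨hc, fun hpc => hcr (eq_of_reaches_of_eq_none hpc hc hpr hr)⟩⟩
    rw [hset, card_erase_of_mem (by simpa using hr), numRoots]
  rw [attachable, card_filter, Fintype.sum_prod_type_right]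
  simp only [← card_filter, hfiber, sum_const, card_univ, Fintype.card_fin, smul_eq_mul]

def forestEdgeLists (n m : ℕ) : Finset (List (Fin n × Fin n)) :=
  ({l : List.Vector (Fin n × Fin n) m |
    (l.toList.map Prod.fst).Nodup ∧ IsRootedForest (parentMap l.toList)} : Finset _).image
      List.Vector.toList

lemma mem_forestEdgeLists {m : ℕ} {l : List (Fin n × Fin n)} :
    l ∈ forestEdgeLists n m ↔
      l.length = m ∧ (l.map Prod.fst).Nodup ∧ IsRootedForest (parentMap l) := by
  simp only [forestEdgeLists, mem_image, mem_filter, mem_univ, true_and]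
  constructor
  · rintro ⟨v, hv, rfl⟩
    exact ⟨v.toList_length, hv⟩
  · rintro ⟨hlen, hv⟩
    exact ⟨⟨l, hlen⟩, hv, rfl⟩

lemma cons_mem_forestEdgeLists_iff {m : ℕ} {e : Fin n × Fin n} {l : List (Fin n × Fin n)} :
    e :: l ∈ forestEdgeLists n (m + 1) ↔
      l ∈ forestEdgeLists n m ∧ e ∈ attachable (parentMap l) := by
  simp only [mem_forestEdgeLists, List.length_cons, List.map_cons, List.nodup_cons, parentMap,
    ← parentMap_eq_none_iff, mem_attachable]
  constructor
  · rintro ⟨hlen, ⟨hc, hnd⟩, hf⟩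
    rw [isRootedForest_update_some_iff hc] at hf
    exact ⟨⟨by omega, hnd, hf.1⟩, hc, hf.2⟩
  · rintro ⟨⟨hlen, hnd, hf⟩, hc, hpc⟩
    exact ⟨by omega, ⟨hc, hnd⟩, (isRootedForest_update_some_iff hc).2 ⟨hf, hpc⟩⟩

lemma card_forestEdgeLists (m : ℕ) :
    #(forestEdgeLists n m) = ∏ i ∈ range m, n * (n - 1 - i) := by
  classical
  induction m with
  | zero =>
    refine card_eq_one.2 ⟨[], eq_singleton_iff_unique_mem.2 ⟨?_, fun l hl => ?_⟩⟩
    · refine mem_forestEdgeLists.2 ⟨rfl, List.nodup_nil,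
        isRootedForest_of_iterParent_succ_ne_self fun v m => ?_⟩
      simp [iterParent_succ', parentMap]
    · exact List.length_eq_zero_iff.1 (mem_forestEdgeLists.1 hl).1
  | succ m ih =>
    have hsucc : forestEdgeLists n (m + 1) =
        (forestEdgeLists n m).biUnion fun l => (attachable (parentMap l)).image (· :: l) := by
      ext s
      cases s with
      | nil => simp [mem_forestEdgeLists]
      | cons e l =>
        simp only [cons_mem_forestEdgeLists_iff, mem_biUnion, mem_image, List.cons.injEq]
        constructor
        · rintro ⟨hl, hx⟩
          exact ⟨l, hl, e, hx, rfl, rfl⟩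
        · rintro ⟨a, ha, x, hx, rfl, rfl⟩
          exact ⟨ha, hx⟩
    have hcard : ∀ l ∈ forestEdgeLists n m,
        #((attachable (parentMap l)).image (· :: l)) = n * (n - 1 - m) := by
      intro l hl
      obtain ⟨hlen, hnd, hf⟩ := mem_forestEdgeLists.1 hl
      have hroots := numRoots_parentMap_add_length hnd
      rw [card_image_of_injective _ fun a b h => (List.cons.inj h).1, hf.card_attachable]
      congr 1
      omega
    rw [hsucc, card_biUnion, sum_congr rfl hcard, sum_const, ih, prod_range_succ, smul_eq_mul]
    intro l _ l' _ hne
    refine disjoint_left.2 fun s hs hs' => hne ?_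
    obtain ⟨e, -, rfl⟩ := mem_image.1 hs
    obtain ⟨e', -, he'⟩ := mem_image.1 hs'
    exact (List.cons.inj he').2.symm

lemma card_filter_parentMap_eq {F : Fin n → Option (Fin n)} {m : ℕ} (hF : IsRootedForest F)
    (hm : numRoots F + m = n) : #{l ∈ forestEdgeLists n m | parentMap l = F} = m.factorial := by
  have hedges := perm_edges_toList_iff.1 (List.Perm.refl (edges F).toList)
  have hcard : (edges F).card = m := by
    have := numRoots_parentMap_add_length hedges.1
    rw [hedges.2, length_toList] at this
    omega
  have hfiber : {l ∈ forestEdgeLists n m | parentMap l = F} =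
      (edges F).toList.permutations.toFinset := by
    ext l
    simp only [mem_filter, mem_forestEdgeLists, List.mem_toFinset, List.mem_permutations,
      perm_edges_toList_iff]
    constructor
    · rintro ⟨⟨-, hnd, -⟩, hl⟩
      exact ⟨hnd, hl⟩
    · rintro ⟨hnd, rfl⟩
      have := numRoots_parentMap_add_length hnd
      exact ⟨⟨by omega, hnd, hF⟩, rfl⟩
  rw [hfiber, List.toFinset_card_of_nodup (List.nodup_permutations _ (nodup_toList _)),
    List.length_permutations, length_toList, hcard]

lemma card_rootedForests {m : ℕ} (hm : m ≤ n) :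
    #{F : Fin n → Option (Fin n) | IsRootedForest F ∧ numRoots F = n - m} =
      (n - 1).choose m * n ^ m := by
  have hsum := card_eq_sum_card_fiberwise (f := parentMap) (s := forestEdgeLists n m)
    (t := {F | IsRootedForest F ∧ numRoots F = n - m}) fun l hl => by
      obtain ⟨hlen, hnd, hf⟩ := mem_forestEdgeLists.1 hl
      have := numRoots_parentMap_add_length hnd
      simpa using ⟨hf, by omega⟩
  rw [card_forestEdgeLists, prod_mul_distrib, prod_const, card_range,
    ← Nat.descFactorial_eq_prod_range, Nat.descFactorial_eq_factorial_mul_choose,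
    sum_congr rfl fun F hF => card_filter_parentMap_eq (mem_filter.1 hF).2.1
      (by have := (mem_filter.1 hF).2.2; omega), sum_const, smul_eq_mul] at hsum
  apply Nat.eq_of_mul_eq_mul_right m.factorial_pos
  rw [← hsum]
  ring

end Counting

theorem numLabeledRootedForests (n k : ℕ) (hn : 1 ≤ n) (hk : 1 ≤ k) :
    Fintype.card {f : Fin n → Option (Fin n) // IsRootedForest f ∧ numRoots f = k} =
      Nat.choose (n - 1) (k - 1) * n ^ (n - k) := by
  rw [Fintype.card_subtype]
  rcases le_or_gt k n with hkn | hnk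
  · have hcount := card_rootedForests (n := n) (Nat.sub_le n k)
    rw [Nat.sub_sub_self hkn] at hcount
    rw [hcount, Nat.choose_symm_of_eq_add (show n - 1 = (n - k) + (k - 1) by omega)]
  · have hnone : ∀ f : Fin n → Option (Fin n), ¬(IsRootedForest f ∧ numRoots f = k) :=
      fun f hf => (numRoots_le f).not_gt (hf.2 ▸ hnk)
    rw [card_eq_zero.2 (filter_eq_empty_iff.2 fun f _ => hnone f),
      Nat.choose_eq_zero_of_lt (by omega), zero_mul]
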